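/- The center of the group G = ⟨Θ, Ψ | Θ²Ψ = ΨΘ², (ΘΨ)³ = Θ⁴⟩ is the subgroup generated by Θ², and it is infinite cyclic. -/

import Mathlib

/-!
`Θ²` commutes with `Θ` and, by the first relation, with `Ψ`, so it is central. Sending
`Θ ↦ a`, `Ψ ↦ a⁻¹b` defines a surjection `G → C₂ * C₃ = ⟨a⟩ * ⟨b⟩`, and `a ↦ Θ`, `b ↦ ΘΨ`
defines a map back to `G ⧸ ⟨Θ²⟩` whose composite with it is the quotient map. A free product
of two nontrivial groups has trivial center, so central elements of `G` die in `C₂ * C₃`, hence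
in `G ⧸ ⟨Θ²⟩`.
Finally `Θ ↦ 3`, `Ψ ↦ 1` is a homomorphism `G → ℤ` sending `Θ²` to `6`, so `Θ²` has infinite
order.
-/

/-- Generators of the group `G = ⟨Θ, Ψ | Θ²Ψ = ΨΘ², (ΘΨ)³ = Θ⁴⟩`. -/
inductive GTilde.Gen | theta | psi
  deriving DecidableEq

namespace GTilde

open FreeGroup

/-- The relations of `G`: `Θ²Ψ(Θ²)⁻¹Ψ⁻¹` and `(ΘΨ)³(Θ⁴)⁻¹`. -/
def rels : Set (FreeGroup Gen) :=
  { (of Gen.theta) ^ 2 * of Gen.psi * ((of Gen.theta) ^ 2)⁻¹ * (of Gen.psi)⁻¹,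
    (of Gen.theta * of Gen.psi) ^ 3 * ((of Gen.theta) ^ 4)⁻¹ }

/-- The group `G = ⟨Θ, Ψ | Θ²Ψ = ΨΘ², (ΘΨ)³ = Θ⁴⟩`. -/
abbrev G := PresentedGroup rels

/-- The generator `Θ` of `G`. -/
def Θ : G := PresentedGroup.of Gen.theta

end GTilde

open GTilde

namespace Monoid.CoprodI

namespace NeWord

variable {ι : Type*} {M : ι → Type*} [∀ i, Monoid (M i)]

theorem head_ne_one {i j : ι} (w : NeWord M i j) : w.head ≠ 1 := by
  induction w with
  | singleton x hx => exact hx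
  | append _ _ _ ih => exact ih

theorem prod_eq_head_or_head_mul_tail {i j : ι} (w : NeWord M i j) :
    (i = j ∧ w.prod = of w.head) ∨
      ∃ k ≠ i, ∃ t : NeWord M k j, w.prod = of w.head * t.prod := by
  induction w with
  | singleton x hx => exact .inl ⟨rfl, prod_singleton x hx⟩
  | @append i j k l w₁ hne w₂ ih _ =>
    right
    rcases ih with ⟨rfl, h⟩ | ⟨k', hk', t, h⟩
    · exact ⟨k, hne.symm, w₂, by rw [append_prod, h, append_head]⟩
    · exact ⟨k', hk', t.append hne w₂,
        by rw [append_prod, h, append_prod, append_head, mul_assoc]⟩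

theorem head_index_eq_of_prod_eq {i₁ j₁ i₂ j₂ : ι} (w₁ : NeWord M i₁ j₁)
    (w₂ : NeWord M i₂ j₂) (h : w₁.prod = w₂.prod) : i₁ = i₂ := by
  classical
  have hw : w₁.toWord = w₂.toWord := Word.equiv.symm.injective h
  have := w₁.toList_head?
  rw [show w₁.toList = w₂.toList from congrArg Word.toList hw, toList_head?] at this
  exact congrArg Sigma.fst (Option.some.inj this).symm

theorem exists_prod_eq (z : CoprodI M) (hz : z ≠ 1) :
    ∃ i j, ∃ w : NeWord M i j, w.prod = z := by
  classical
  obtain ⟨i, j, w, hw⟩ := of_word (Word.equiv z) fun h =>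
    hz (Word.equiv.injective (by rw [h]; exact (one_smul (CoprodI M) _).symm))
  exact ⟨i, j, w, by rw [NeWord.prod, hw]; exact Word.equiv.symm_apply_apply z⟩

end NeWord

variable {ι : Type*} {G : ι → Type*} [∀ i, Group (G i)]

theorem center_eq_bot (h : ∀ i, ∃ j ≠ i, Nontrivial (G j)) :
    Subgroup.center (CoprodI G) = ⊥ := by
  refine (Subgroup.eq_bot_iff_forall _).2 fun z hz => ?_
  rw [Subgroup.mem_center_iff] at hz
  by_contra hz1
  obtain ⟨i, j, w, rfl⟩ := NeWord.exists_prod_eq z hz1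
  obtain rfl | hij := eq_or_ne i j
  · -- `g w = w g` for a letter `g` from another factor, but the two words start differently
    obtain ⟨k, hki, _⟩ := h i
    obtain ⟨g, hg⟩ := exists_ne (1 : G k)
    refine hki (NeWord.head_index_eq_of_prod_eq ((NeWord.singleton g hg).append hki w)
      (w.append hki.symm (NeWord.singleton g hg)) ?_)
    simp only [NeWord.append_prod, NeWord.prod_singleton, hz]
  · -- conjugating by the first letter moves it to the end, changing the first index
    obtain ⟨hij', -⟩ | ⟨k, hki, t, ht⟩ := w.prod_eq_head_or_head_mul_tail
    · exact absurd hij' hij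
    refine hki (NeWord.head_index_eq_of_prod_eq
      (t.append hij.symm (NeWord.singleton w.head w.head_ne_one)) w ?_)
    refine mul_left_cancel (a := of w.head) ?_
    rw [NeWord.append_prod, NeWord.prod_singleton, ← mul_assoc, ← ht, hz]

end Monoid.CoprodI

theorem Subgroup.normal_of_le_center {G : Type*} [Group G] {H : Subgroup G}
    (h : H ≤ Subgroup.center G) : H.Normal :=
  ⟨fun n hn g => by rwa [Subgroup.mem_center_iff.1 (h hn) g, mul_inv_cancel_right]⟩

theorem Subgroup.map_mem_center_of_surjective {G N : Type*} [Group G] [Group N] {f : G →* N}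
    (hf : Function.Surjective f) {z : G} (hz : z ∈ Subgroup.center G) :
    f z ∈ Subgroup.center N := by
  refine Subgroup.mem_center_iff.2 fun q => ?_
  obtain ⟨g, rfl⟩ := hf q
  rw [← map_mul, ← map_mul, Subgroup.mem_center_iff.1 hz g]

section ZModHom

open Multiplicative

variable {N : Type*} [Group N] {n : ℕ}

def zmodPowHom (g : N) (hg : g ^ n = 1) : Multiplicative (ZMod n) →* N :=
  AddMonoidHom.toMultiplicativeLeft <| ZMod.lift n
    ⟨zmultiplesHom (Additive N) (Additive.ofMul g), by simp [← ofMul_pow, hg]⟩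

theorem zmodPowHom_ofAdd_intCast (g : N) (hg : g ^ n = 1) (k : ℤ) :
    zmodPowHom g hg (ofAdd (k : ZMod n)) = g ^ k := by
  simp [zmodPowHom]

theorem zmodPowHom_ofAdd_one (g : N) (hg : g ^ n = 1) : zmodPowHom g hg (ofAdd 1) = g := by
  simpa using zmodPowHom_ofAdd_intCast g hg 1

theorem MonoidHom.range_le_of_map_ofAdd_one_mem (f : Multiplicative (ZMod n) →* N)
    {S : Subgroup N} (h : f (ofAdd 1) ∈ S) : f.range ≤ S := by
  rintro _ ⟨x, rfl⟩
  obtain ⟨k, hk⟩ := ZMod.intCast_surjective (toAdd x)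
  rw [← ofAdd_toAdd x, ← hk, ← zsmul_one, ofAdd_zsmul, map_zpow]
  exact S.zpow_mem h k

theorem ofAdd_one_pow_card : (ofAdd (1 : ZMod n)) ^ n = 1 := by
  rw [← ofAdd_nsmul, nsmul_one, ZMod.natCast_self, ofAdd_zero]

end ZModHom

namespace GTilde

open Monoid Multiplicative

def Ψ : G := PresentedGroup.of Gen.psi

theorem theta_sq_mul_psi : Θ ^ 2 * Ψ = Ψ * Θ ^ 2 := by
  have h : Θ ^ 2 * Ψ * (Θ ^ 2)⁻¹ * Ψ⁻¹ = 1 :=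
    PresentedGroup.one_of_mem (rels := rels) (Set.mem_insert _ _)
  rwa [mul_inv_eq_one, mul_inv_eq_iff_eq_mul] at h

theorem theta_mul_psi_pow_three : (Θ * Ψ) ^ 3 = Θ ^ 4 := by
  have h : (Θ * Ψ) ^ 3 * (Θ ^ 4)⁻¹ = 1 :=
    PresentedGroup.one_of_mem (rels := rels) (Set.mem_insert_of_mem _ rfl)
  rwa [mul_inv_eq_one] at h

section Lift

variable {N : Type*} [Group N] (x y : N) (h₁ : x ^ 2 * y = y * x ^ 2) (h₂ : (x * y) ^ 3 = x ^ 4)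

def lift : G →* N :=
  PresentedGroup.toGroup (f := fun | .theta => x | .psi => y) <| by
    rintro r (rfl | rfl) <;> simp [h₁, h₂]

theorem lift_theta : lift x y h₁ h₂ Θ = x := PresentedGroup.toGroup.of _

theorem lift_psi : lift x y h₁ h₂ Ψ = y := PresentedGroup.toGroup.of _

end Lift

theorem theta_sq_mem_center : Θ ^ 2 ∈ Subgroup.center G := by
  refine Subgroup.mem_center_iff.2 fun g => ?_
  have : g ∈ Subgroup.centralizer {Θ ^ 2} := by
    refine PresentedGroup.generated_by rels _ (fun j => ?_) g
    rintro _ rfl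
    cases j
    · exact ((Commute.refl Θ).pow_left 2).eq
    · exact theta_sq_mul_psi
  exact (Subgroup.mem_centralizer_iff.1 this _ rfl).symm

abbrev Factor23 (b : Bool) : Type := Multiplicative (ZMod (cond b 3 2))

abbrev C2C3 := CoprodI Factor23

theorem center_C2C3 : Subgroup.center C2C3 = ⊥ :=
  CoprodI.center_eq_bot fun i =>
    ⟨!i, by cases i <;> decide, ZMod.nontrivial_iff.2 (by cases i <;> decide)⟩

def gen (i : Bool) : C2C3 := CoprodI.of (i := i) (ofAdd 1)

theorem gen_pow_order (i : Bool) : gen i ^ cond i 3 2 = 1 := by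
  rw [gen, ← map_pow, ofAdd_one_pow_card, map_one]

theorem gen_false_pow_two : gen false ^ 2 = 1 := gen_pow_order false

theorem gen_true_pow_three : gen true ^ 3 = 1 := gen_pow_order true

def toC2C3 : G →* C2C3 :=
  lift (gen false) ((gen false)⁻¹ * gen true)
    (by rw [gen_false_pow_two, one_mul, mul_one])
    (by rw [mul_inv_cancel_left, gen_true_pow_three, pow_mul _ 2 2, gen_false_pow_two, one_pow])

theorem toC2C3_surjective : Function.Surjective toC2C3 := by
  rw [← MonoidHom.range_eq_top, eq_top_iff]
  rintro q -
  induction q using CoprodI.induction_on with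
  | one => exact one_mem _
  | of i m =>
    refine MonoidHom.range_le_of_map_ofAdd_one_mem (CoprodI.of (M := Factor23) (i := i)) ?_
      ⟨m, rfl⟩
    cases i
    · exact ⟨Θ, lift_theta ..⟩
    · exact ⟨Θ * Ψ, by rw [toC2C3, map_mul, lift_theta, lift_psi, mul_inv_cancel_left]; rfl⟩
  | mul x y hx hy => exact mul_mem hx hy

instance : (Subgroup.zpowers (Θ ^ 2)).Normal :=
  Subgroup.normal_of_le_center (Subgroup.zpowers_le.2 theta_sq_mem_center)

def ofC2C3 : C2C3 →* G ⧸ Subgroup.zpowers (Θ ^ 2) :=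
  CoprodI.lift fun
    | false => zmodPowHom (Θ : G ⧸ Subgroup.zpowers (Θ ^ 2)) <| by
        rw [← QuotientGroup.mk_pow, QuotientGroup.eq_one_iff]
        exact Subgroup.mem_zpowers _
    | true => zmodPowHom ((Θ * Ψ : G) : G ⧸ Subgroup.zpowers (Θ ^ 2)) <| by
        show ((Θ * Ψ : G) : G ⧸ Subgroup.zpowers (Θ ^ 2)) ^ 3 = 1
        rw [← QuotientGroup.mk_pow, QuotientGroup.eq_one_iff, theta_mul_psi_pow_three,
          pow_mul Θ 2 2]
        exact Subgroup.npow_mem_zpowers _ 2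

theorem ofC2C3_gen_false : ofC2C3 (gen false) = Θ :=
  (CoprodI.lift_of _ _).trans (zmodPowHom_ofAdd_one _ _)

theorem ofC2C3_gen_true : ofC2C3 (gen true) = (Θ * Ψ : G) :=
  (CoprodI.lift_of _ _).trans (zmodPowHom_ofAdd_one _ _)

theorem ofC2C3_comp_toC2C3 :
    ofC2C3.comp toC2C3 = QuotientGroup.mk' (Subgroup.zpowers (Θ ^ 2)) := by
  refine PresentedGroup.ext fun x => ?_
  cases x
  · show ofC2C3 (toC2C3 Θ) = Θ
    rw [toC2C3, lift_theta, ofC2C3_gen_false]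
  · show ofC2C3 (toC2C3 Ψ) = Ψ
    rw [toC2C3, lift_psi, map_mul, map_inv, ofC2C3_gen_false, ofC2C3_gen_true,
      ← QuotientGroup.mk_inv, ← QuotientGroup.mk_mul, inv_mul_cancel_left]

theorem center_le_zpowers_theta_sq : Subgroup.center G ≤ Subgroup.zpowers (Θ ^ 2) := by
  intro z hz
  have : toC2C3 z = 1 := by
    simpa [center_C2C3] using Subgroup.map_mem_center_of_surjective toC2C3_surjective hz
  rw [← QuotientGroup.eq_one_iff, ← QuotientGroup.mk'_apply, ← ofC2C3_comp_toC2C3,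
    MonoidHom.comp_apply, this, map_one]

def degree : G →* Multiplicative ℤ := lift (ofAdd 3) (ofAdd 1) (mul_comm _ _) (by decide)

theorem eq_zero_of_theta_sq_zpow_eq_one {n : ℤ} (h : (Θ ^ 2) ^ n = 1) : n = 0 := by
  have h6 : toAdd (degree ((Θ ^ 2) ^ n)) = n * 6 := by simp [degree, lift_theta]
  rw [h, map_one, toAdd_one] at h6
  omega

end GTilde

/-- The center of `G = ⟨Θ, Ψ | Θ²Ψ = ΨΘ², (ΘΨ)³ = Θ⁴⟩` is the subgroup generated by `Θ²`,
and it is infinite cyclic (`Θ²` has infinite order). -/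
theorem stmt1 :
    Subgroup.center G = Subgroup.zpowers (Θ ^ 2) ∧
    ∀ n : ℤ, (Θ ^ 2) ^ n = 1 → n = 0 :=
  ⟨le_antisymm center_le_zpowers_theta_sq (Subgroup.zpowers_le.2 theta_sq_mem_center),
    fun _ => eq_zero_of_theta_sq_zpow_eq_one⟩
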